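/- Let R be a commutative Noetherian ring with unity, H a finitely generated abelian group of positive rank, and I a proper ideal of RH. Then Trop_R(I) = Trop_R(√I) = ⋃_𝔭 Trop_R(𝔭), where 𝔭 runs over the minimal prime ideals of RH over I; explicitly, for every group homomorphism χ : H → ℝ the following are equivalent: (a) in_χ(I) ≠ RH; (b) in_χ(√I) ≠ RH; (c) there exists a minimal prime 𝔭 of RH over I with in_χ(𝔭) ≠ RH. In particular Trop_R(I) depends only on the radical √I. -/

import Mathlib

open AddMonoidAlgebra

/-- The initial form `in_χ(f)`: the sum of the terms of `f` on which `χ` attains its minimum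
over the support of `f` (for `f = 0` this is `0`). -/
noncomputable def initialForm {R H : Type*} [CommRing R] [AddCommGroup H] (χ : H →+ ℝ)
    (f : AddMonoidAlgebra R H) : AddMonoidAlgebra R H :=
  haveI : DecidablePred (fun h => ∀ h' ∈ f.coeff.support, χ h ≤ χ h') := Classical.decPred _
  ofCoeff (Finsupp.filter (fun h => ∀ h' ∈ f.coeff.support, χ h ≤ χ h') f.coeff)

/-- The initial ideal `in_χ(I)`, generated by the initial forms of the nonzero elements
of `I`. -/
noncomputable def initialIdeal {R H : Type*} [CommRing R] [AddCommGroup H] (χ : H →+ ℝ)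
    (I : Ideal (AddMonoidAlgebra R H)) : Ideal (AddMonoidAlgebra R H) :=
  Ideal.span {g | ∃ f ∈ I, f ≠ 0 ∧ g = initialForm χ f}

section Lemmas

variable {R H : Type*} [CommRing R] [AddCommGroup H] (χ : H →+ ℝ)

lemma initialForm_apply (f : AddMonoidAlgebra R H) (h : H) :
    (initialForm χ f).coeff h =
      if ∀ h' ∈ f.coeff.support, χ h ≤ χ h' then f.coeff h else 0 := by
  classical
  rw [initialForm, AddMonoidAlgebra.coeff_ofCoeff]
  rw [Finsupp.filter_apply]
  split_ifs with hcond <;> rfl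

lemma initialForm_zero : initialForm χ (0 : AddMonoidAlgebra R H) = 0 := by
  ext h; rw [initialForm_apply]; simp

lemma mem_support_initialForm {f : AddMonoidAlgebra R H} {h : H} :
    h ∈ (initialForm χ f).coeff.support ↔
      h ∈ f.coeff.support ∧ ∀ h' ∈ f.coeff.support, χ h ≤ χ h' := by
  classical
  simp only [Finsupp.mem_support_iff, initialForm_apply]
  split_ifs with hp <;> [skip; skip] <;> constructor
  · exact fun h1 => ⟨h1, hp⟩
  · exact fun h1 => h1.1
  · exact fun h1 => absurd hp (by tauto)
  · exact fun h1 => absurd h1.2 hp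

end Lemmas

section MulLemma

variable {R H : Type*} [CommRing R] [AddCommGroup H] (χ : H →+ ℝ)

lemma initialForm_mul (f g : AddMonoidAlgebra R H)
    (hne : initialForm χ f * initialForm χ g ≠ 0) :
    initialForm χ (f * g) = initialForm χ f * initialForm χ g := by
  classical
  have hf : f ≠ 0 := by rintro rfl; simp [initialForm_zero] at hne
  have hg : g ≠ 0 := by rintro rfl; simp [initialForm_zero] at hne
  have hfs : f.coeff.support.Nonempty :=
    Finsupp.support_nonempty_iff.2 (mt AddMonoidAlgebra.coeff_eq_zero.1 hf)
  have hgs : g.coeff.support.Nonempty :=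
    Finsupp.support_nonempty_iff.2 (mt AddMonoidAlgebra.coeff_eq_zero.1 hg)
  set a := f.coeff.support.inf' hfs χ with ha
  set b := g.coeff.support.inf' hgs χ with hb
  set F := initialForm χ f with hF
  set G := initialForm χ g with hG
  have hfa : ∀ h ∈ f.coeff.support, a ≤ χ h := fun h hh => Finset.inf'_le χ hh
  have hgb : ∀ h ∈ g.coeff.support, b ≤ χ h := fun h hh => Finset.inf'_le χ hh
  have hFsup : ∀ h ∈ F.coeff.support, χ h = a := by
    intro h hh
    rw [hF, mem_support_initialForm] at hh
    exact le_antisymm ((Finset.le_inf'_iff _ _).2 hh.2) (hfa h hh.1)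
  have hGsup : ∀ h ∈ G.coeff.support, χ h = b := by
    intro h hh
    rw [hG, mem_support_initialForm] at hh
    exact le_antisymm ((Finset.le_inf'_iff _ _).2 hh.2) (hgb h hh.1)
  have hFc : ∀ h ∈ (f - F).coeff.support, h ∈ f.coeff.support ∧ a < χ h := by
    intro h hh
    rw [Finsupp.mem_support_iff, AddMonoidAlgebra.coeff_sub, Finsupp.sub_apply, hF,
      initialForm_apply] at hh
    by_cases hp : ∀ h' ∈ f.coeff.support, χ h ≤ χ h'
    · rw [if_pos hp, sub_self] at hh; exact absurd rfl hh
    · rw [if_neg hp, sub_zero] at hh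
      push_neg at hp
      obtain ⟨h', hh', hlt⟩ := hp
      exact ⟨Finsupp.mem_support_iff.2 hh, lt_of_le_of_lt (hfa h' hh') hlt⟩
  have hGc : ∀ h ∈ (g - G).coeff.support, h ∈ g.coeff.support ∧ b < χ h := by
    intro h hh
    rw [Finsupp.mem_support_iff, AddMonoidAlgebra.coeff_sub, Finsupp.sub_apply, hG,
      initialForm_apply] at hh
    by_cases hp : ∀ h' ∈ g.coeff.support, χ h ≤ χ h'
    · rw [if_pos hp, sub_self] at hh; exact absurd rfl hh
    · rw [if_neg hp, sub_zero] at hh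
      push_neg at hp
      obtain ⟨h', hh', hlt⟩ := hp
      exact ⟨Finsupp.mem_support_iff.2 hh, lt_of_le_of_lt (hgb h' hh') hlt⟩
  set q := F * (g - G) + (f - F) * g with hqdef
  have hdecomp : f * g = F * G + q := by rw [hqdef]; ring
  have hFG : ∀ x ∈ (F * G).coeff.support, χ x = a + b := by
    intro x hx
    obtain ⟨y, hy, z, hz, rfl⟩ := Finset.mem_add.1 (AddMonoidAlgebra.support_coeff_mul_subset F G hx)
    rw [map_add, hFsup y hy, hGsup z hz]
  have hq : ∀ x ∈ q.coeff.support, a + b < χ x := by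
    intro x hx
    have hx : x ∈ ((F * (g - G)).coeff + ((f - F) * g).coeff).support := hx
    rcases Finset.mem_union.1 (Finsupp.support_add hx) with hx1 | hx2
    · obtain ⟨y, hy, z, hz, rfl⟩ := Finset.mem_add.1 (AddMonoidAlgebra.support_coeff_mul_subset _ _ hx1)
      rw [map_add, hFsup y hy]
      exact add_lt_add_right (hGc z hz).2 a
    · obtain ⟨y, hy, z, hz, rfl⟩ := Finset.mem_add.1 (AddMonoidAlgebra.support_coeff_mul_subset _ _ hx2)
      rw [map_add]
      have := (hFc y hy).2
      have := hgb z hz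
      linarith
  have hdisj : Disjoint (F * G).coeff.support q.coeff.support :=
    Finset.disjoint_left.2 fun x h1 h2 => absurd (hFG x h1) (hq x h2).ne'
  have hsupp : (f * g).coeff.support = (F * G).coeff.support ∪ q.coeff.support := by
    rw [hdecomp, AddMonoidAlgebra.coeff_add]; exact Finsupp.support_add_eq hdisj
  obtain ⟨x0, hx0⟩ := Finsupp.support_nonempty_iff.2 (mt AddMonoidAlgebra.coeff_eq_zero.1 hne)
  have hmin : ∀ x ∈ (f * g).coeff.support, a + b ≤ χ x := by
    intro x hx
    rw [hsupp] at hx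
    rcases Finset.mem_union.1 hx with hx1 | hx2
    · exact (hFG x hx1).ge
    · exact (hq x hx2).le
  ext h
  rw [initialForm_apply]
  by_cases hp : ∀ h' ∈ (f * g).coeff.support, χ h ≤ χ h'
  · rw [if_pos hp, hdecomp, AddMonoidAlgebra.coeff_add, Finsupp.add_apply]
    have hqh : q.coeff h = 0 := by
      by_contra h0
      have h1 : a + b < χ h := hq h (Finsupp.mem_support_iff.2 h0)
      have h2 : χ h ≤ χ x0 := hp x0 (hsupp ▸ Finset.mem_union_left _ hx0)
      rw [hFG x0 hx0] at h2; linarith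
    rw [hqh, add_zero]
  · rw [if_neg hp]
    symm
    by_contra h0
    have hh : h ∈ (F * G).coeff.support := Finsupp.mem_support_iff.2 h0
    refine hp fun h' hh' => ?_
    rw [hFG h hh]
    exact hmin h' hh'

end MulLemma

section IdealLemmas

variable {R H : Type*} [CommRing R] [AddCommGroup H] (χ : H →+ ℝ)

lemma initialIdeal_mono {J K : Ideal (AddMonoidAlgebra R H)} (h : J ≤ K) :
    initialIdeal χ J ≤ initialIdeal χ K :=
  Ideal.span_mono fun g ⟨f, hf, hf0, hg⟩ => ⟨f, h hf, hf0, hg⟩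

lemma initialForm_mem_initialIdeal {J : Ideal (AddMonoidAlgebra R H)}
    {f : AddMonoidAlgebra R H} (hf : f ∈ J) : initialForm χ f ∈ initialIdeal χ J := by
  by_cases h0 : f = 0
  · subst h0; rw [initialForm_zero]; exact zero_mem _
  · exact Ideal.subset_span ⟨f, hf, h0, rfl⟩

lemma initialForm_one : initialForm χ (1 : AddMonoidAlgebra R H) = 1 := by
  classical
  ext h
  rw [initialForm_apply]
  by_cases hp : ∀ h' ∈ (1 : AddMonoidAlgebra R H).coeff.support, χ h ≤ χ h'
  · rw [if_pos hp]
  · rw [if_neg hp]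
    push_neg at hp
    obtain ⟨h', hh', hlt⟩ := hp
    have h'0 : h' = 0 := by
      have := Finsupp.support_single_subset (a := (0 : H)) (b := (1 : R)) hh'
      simpa using this
    subst h'0
    rw [map_zero] at hlt
    have hne : h ≠ 0 := by rintro rfl; rw [map_zero] at hlt; exact lt_irrefl _ hlt
    have : (1 : AddMonoidAlgebra R H).coeff h = 0 := by
      show (Finsupp.single (0 : H) (1 : R)) h = 0
      rw [Finsupp.single_apply]
      rw [if_neg (fun hc => hne hc.symm)]
    rw [this]

lemma initialIdeal_top : initialIdeal χ (⊤ : Ideal (AddMonoidAlgebra R H)) = ⊤ := by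
  rw [Ideal.eq_top_iff_one, ← initialForm_one χ (R := R) (H := H)]
  exact initialForm_mem_initialIdeal χ Submodule.mem_top

lemma initialIdeal_mul_le (J K : Ideal (AddMonoidAlgebra R H)) :
    initialIdeal χ J * initialIdeal χ K ≤ initialIdeal χ (J * K) := by
  rw [initialIdeal, initialIdeal, Ideal.span_mul_span']
  rw [Ideal.span_le]
  rintro x ⟨s, ⟨f, hfJ, hf0, rfl⟩, t, ⟨g, hgK, hg0, rfl⟩, rfl⟩
  show initialForm χ f * initialForm χ g ∈ (initialIdeal χ (J * K) : Set _)
  by_cases h0 : initialForm χ f * initialForm χ g = 0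
  · rw [h0]; exact zero_mem _
  · rw [← initialForm_mul χ f g h0]
    exact initialForm_mem_initialIdeal χ (Ideal.mul_mem_mul hfJ hgK)

lemma initialIdeal_prod_le (s : Finset (Ideal (AddMonoidAlgebra R H))) :
    (∏ p ∈ s, initialIdeal χ p) ≤ initialIdeal χ (∏ p ∈ s, p) := by
  classical
  induction s using Finset.cons_induction with
  | empty => simp [initialIdeal_top]
  | cons p s hps ih =>
      rw [Finset.prod_cons, Finset.prod_cons]
      calc initialIdeal χ p * ∏ q ∈ s, initialIdeal χ q
          ≤ initialIdeal χ p * initialIdeal χ (∏ q ∈ s, q) := Ideal.mul_mono_right ih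
        _ ≤ initialIdeal χ (p * ∏ q ∈ s, q) := initialIdeal_mul_le χ _ _

lemma initialIdeal_radical_le (J : Ideal (AddMonoidAlgebra R H)) :
    initialIdeal χ J.radical ≤ (initialIdeal χ J).radical := by
  rw [initialIdeal, Ideal.span_le]
  rintro x ⟨f, hf, hf0, rfl⟩
  obtain ⟨n, hn⟩ := hf
  rcases Nat.eq_zero_or_pos n with rfl | hn1
  · rw [pow_zero] at hn
    have : initialIdeal χ J = ⊤ := by
      rw [Ideal.eq_top_iff_one, ← initialForm_one χ (R := R) (H := H)]
      exact initialForm_mem_initialIdeal χ hn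
    rw [this, Ideal.radical_top]; trivial
  · refine ⟨n, ?_⟩
    have key : ∀ m : ℕ, 1 ≤ m →
        initialForm χ f ^ m = 0 ∨ initialForm χ f ^ m = initialForm χ (f ^ m) := by
      intro m hm
      induction m, hm using Nat.le_induction with
      | base => right; rw [pow_one, pow_one]
      | succ m hm ih =>
          rcases ih with h0 | heq
          · left; rw [pow_succ, h0, zero_mul]
          · by_cases hz : initialForm χ (f ^ m) * initialForm χ f = 0
            · left; rw [pow_succ, heq, hz]
            · right
              rw [pow_succ, heq, ← initialForm_mul χ _ _ hz, ← pow_succ]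
    rcases key n hn1 with h0 | heq
    · rw [h0]; exact zero_mem _
    · rw [heq]; exact initialForm_mem_initialIdeal χ hn

end IdealLemmas

/-- For `R` commutative Noetherian, `H` a finitely generated abelian group of
positive rank and `I ⊊ RH` a proper ideal, the tropical variety of `I` over `R` equals that of
`√I` and equals the union of those of the minimal primes over `I`: for every character
`χ : H → ℝ`, `in_χ(I) ≠ RH` iff `in_χ(√I) ≠ RH` iff `in_χ(𝔭) ≠ RH` for some minimal prime
`𝔭` over `I`.  In particular `Trop_R(I)` depends only on `√I`. -/
theorem initialIdeal_ne_top_iff_radical_iff_minimalPrimes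
    (R : Type*) [CommRing R] [IsNoetherianRing R]
    (H : Type*) [AddCommGroup H] [AddGroup.FG H] [Infinite H]
    (I : Ideal (AddMonoidAlgebra R H)) (hI : I ≠ ⊤) (χ : H →+ ℝ) :
    (initialIdeal χ I ≠ ⊤ ↔ initialIdeal χ I.radical ≠ ⊤) ∧
    (initialIdeal χ I ≠ ⊤ ↔
      ∃ 𝔭 ∈ I.minimalPrimes, initialIdeal χ 𝔭 ≠ ⊤) := by
  classical
  haveI : AddMonoid.FG H := AddGroup.fg_iff_addMonoid_fg.mp ‹_›
  haveI : IsNoetherianRing (AddMonoidAlgebra R H) :=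
    Algebra.FiniteType.isNoetherianRing R (AddMonoidAlgebra R H)
  -- the first equivalence
  have hrad : initialIdeal χ I ≠ ⊤ ↔ initialIdeal χ I.radical ≠ ⊤ := by
    constructor
    · intro hne htop
      apply hne
      have h1 : initialIdeal χ I.radical ≤ (initialIdeal χ I).radical :=
        initialIdeal_radical_le χ I
      rw [htop] at h1
      have h2 : (initialIdeal χ I).radical = ⊤ := top_le_iff.mp h1
      rw [Ideal.radical_eq_top] at h2
      exact h2
    · intro hne htop
      exact hne (top_le_iff.mp (htop ▸ initialIdeal_mono χ Ideal.le_radical))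
  refine ⟨hrad, ?_, ?_⟩
  · -- (a) → (c)
    intro hne
    by_contra hc
    push_neg at hc
    have hfin : I.minimalPrimes.Finite := by
      haveI : IsNoetherianRing (AddMonoidAlgebra R H ⧸ I) :=
        isNoetherianRing_of_surjective _ _ (Ideal.Quotient.mk I)
          Ideal.Quotient.mk_surjective
      rw [Ideal.minimalPrimes_eq_comap]
      exact (minimalPrimes.finite_of_isNoetherianRing _).image _
    set s : Finset (Ideal (AddMonoidAlgebra R H)) := hfin.toFinset with hs
    have hprod_top : (∏ p ∈ s, initialIdeal χ p) = ⊤ := by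
      rw [← Ideal.one_eq_top]
      refine Finset.prod_eq_one fun p hp => ?_
      rw [Ideal.one_eq_top]
      have := hc p (hfin.mem_toFinset.mp hp)
      tauto
    have hprod_le : (∏ p ∈ s, p) ≤ I.radical := by
      rw [← Ideal.sInf_minimalPrimes]
      refine le_sInf fun q hq => ?_
      exact Ideal.prod_le_inf.trans (Finset.inf_le (hfin.mem_toFinset.mpr hq))
    have : (⊤ : Ideal (AddMonoidAlgebra R H)) ≤ initialIdeal χ I.radical := by
      calc (⊤ : Ideal (AddMonoidAlgebra R H)) = ∏ p ∈ s, initialIdeal χ p := hprod_top.symm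
        _ ≤ initialIdeal χ (∏ p ∈ s, p) := initialIdeal_prod_le χ s
        _ ≤ initialIdeal χ I.radical := initialIdeal_mono χ hprod_le
    exact (hrad.mp hne) (top_le_iff.mp this)
  · -- (c) → (a)
    rintro ⟨p, hp, hpne⟩ htop
    exact hpne (top_le_iff.mp (htop ▸ initialIdeal_mono χ hp.1.2))
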